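/- arXiv:2202.10198 — 3 statements merged into one kernel-verified Lean document; each statement's English description precedes it below -/
import Mathlib

section
/- Let G be a countable amenable group and let φ : P_fin(G) → [0,∞) be a function on nonempty finite subsets of G satisfying: (i) φ(F₁) ≤ φ(F₂) whenever F₁ ⊆ F₂; (ii) φ(Fg) = φ(F) for all finite F and g ∈ G; (iii) φ(F₁ ∪ F₂) ≤ φ(F₁) + φ(F₂). Then there exists b ≥ 0 such that for every ε > 0 there exist a finite set K ⊆ G and δ > 0 such that |b − φ(F)/|F|| ≤ ε for every nonempty finite (K, δ)-invariant set F ⊆ G. -/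
/-!
Let `b` be the supremum of the numbers that bound `φ F / |F|` from below on all sufficiently
invariant `F`; the lower estimate holds by construction, and at every invariance level there are
shapes `S` with `φ S ≤ (b + ε/4) |S|`. Choose such shapes `T 0, …, T (n-1)`, each `θ`-invariant
under the inverses of the previous ones. Ornstein–Weiss quasitiling: inside a sufficiently
invariant `F`, greedily place right translates of the shapes, the most invariant one first; each
stage keeps its translates `(1 - θ)`-disjoint and covers about a `θ`-fraction of what is left, so
after `n` stages at most `4θ |F|` points stay uncovered. Subadditivity and right invariance then
bound `φ F` by the tiles' contributions plus `φ {1}` per uncovered point.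
-/

open scoped Pointwise ENNReal

/-- An action of a group `G` on a set `X`. -/
structure GAction (G X : Type*) [Group G] where
  act : G → X → X
  act_one : ∀ x, act 1 x = x
  act_mul : ∀ g h x, act (g * h) x = act g (act h x)

/-- The dynamical sup-metric `d^α_F(x,y) = max_{g ∈ F} d(α_g x, α_g y)`. -/
noncomputable def dynMetric {G X : Type*} [Group G] (α : GAction G X)
    (d : X → X → ℝ) (F : Finset G) (x y : X) : ℝ :=
  ↑(F.sup fun g => (d (α.act g x) (α.act g y)).toNNReal)

/-- `widim_ε(X, d)`: minimal order of a finite open cover of mesh at most `ε`. -/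
noncomputable def widim {X : Type*} [TopologicalSpace X] (d : X → X → ℝ) (ε : ℝ) : ℕ :=
  sInf {n : ℕ | ∃ 𝒰 : Finset (Set X),
    (∀ U ∈ 𝒰, IsOpen U) ∧ (∀ x : X, ∃ U ∈ 𝒰, x ∈ U) ∧
    (∀ U ∈ 𝒰, ∀ x ∈ U, ∀ y ∈ U, d x y ≤ ε) ∧
    ∀ x : X, {U : Set X | U ∈ 𝒰 ∧ x ∈ U}.ncard ≤ n + 1}

/-- `F` is `(K, δ)`-invariant: `|KF \ F| ≤ δ |F|`. -/
def IsFolnerInv {G : Type*} [Group G] (K : Finset G) (δ : ℝ) (F : Finset G) : Prop :=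
  letI := Classical.decEq G
  (((K * F) \ F).card : ℝ) ≤ δ * F.card

/-- A Følner sequence of nonempty finite subsets of `G`. -/
def IsFolnerSeq {G : Type*} [Group G] (Fseq : ℕ → Finset G) : Prop :=
  (∀ n, (Fseq n).Nonempty) ∧
    ∀ (K : Finset G) (δ : ℝ), 0 < δ → ∃ N : ℕ, ∀ n ≥ N, IsFolnerInv K δ (Fseq n)

/-- `mdim_ε(X, α, d)` computed along the sequence `Fseq`. -/
noncomputable def mdimEps {G X : Type*} [Group G] [TopologicalSpace X] (α : GAction G X)
    (d : X → X → ℝ) (Fseq : ℕ → Finset G) (ε : ℝ) : ℝ≥0∞ :=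
  Filter.atTop.limsup fun n =>
    (widim (dynMetric α d (Fseq n)) ε : ℝ≥0∞) / ((Fseq n).card : ℝ≥0∞)

/-- Mean dimension `mdim(X, α) = sup_{ε > 0} mdim_ε(X, α, d)`. -/
noncomputable def mdim {G X : Type*} [Group G] [TopologicalSpace X] (α : GAction G X)
    (d : X → X → ℝ) (Fseq : ℕ → Finset G) : ℝ≥0∞ :=
  ⨆ (ε : ℝ) (_ : 0 < ε), mdimEps α d Fseq ε

/-- An `ε`-embedding: all fibers have diameter `< ε`. -/
def IsEpsEmbedding {X Z : Type*} [PseudoMetricSpace X] (f : X → Z) (ε : ℝ) : Prop :=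
  ∀ z : Z, Metric.diam (f ⁻¹' {z}) < ε

/-- The orbit map `I_f(x) = (f(α_g(x)))_{g ∈ G}` (with the index convention making it
equivariant for the shift `σ_g((x_h)_h) = (x_{g⁻¹h})_h`). -/
def Ifun {G X K : Type*} [Group G] (α : GAction G X) (f : X → K) (x : X) (g : G) : K :=
  f (α.act g⁻¹ x)

/-- Almost finiteness: clopen castles with arbitrarily invariant shapes partitioning the space. -/
def IsAlmostFinite {G Y : Type*} [Group G] [TopologicalSpace Y] (β : GAction G Y) : Prop :=
  ∀ (K : Finset G) (δ : ℝ), 0 < δ →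
    ∃ (ι : Type) (_ : Fintype ι) (W : ι → Set Y) (S : ι → Finset G),
      (∀ i, IsClopen (W i)) ∧
      (∀ i, (S i).Nonempty ∧ IsFolnerInv K δ (S i)) ∧
      (∀ i j : ι, ∀ s ∈ S i, ∀ t ∈ S j, ¬(i = j ∧ s = t) →
        Disjoint (β.act s '' W i) (β.act t '' W j)) ∧
      (⋃ i, ⋃ s ∈ S i, β.act s '' W i) = Set.univ

/-- `d` is a metric on `X` inducing the given topology. -/
def IsCompatibleMetric {X : Type*} [TopologicalSpace X] (d : X → X → ℝ) : Prop :=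
  (∀ x y, 0 ≤ d x y) ∧ (∀ x y, d x y = 0 ↔ x = y) ∧ (∀ x y, d x y = d y x) ∧
    (∀ x y z, d x z ≤ d x y + d y z) ∧
    ∀ s : Set X, IsOpen s ↔ ∀ x ∈ s, ∃ ε > 0, {y | d x y < ε} ⊆ s

/-- The shift action `σ_g((x_h)_h) = (x_{g⁻¹h})_h` of `G` on `K^G`. -/
def shiftAction (G : Type*) [Group G] (K : Type*) : GAction G (G → K) where
  act g x h := x (g⁻¹ * h)
  act_one x := by funext h; simp
  act_mul g g' x := by funext h; simp [mul_assoc]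

open Finset

section Folner

variable {G : Type*} [Group G] [DecidableEq G]

theorem isFolnerInv_iff {K : Finset G} {δ : ℝ} {F : Finset G} :
    IsFolnerInv K δ F ↔ (#((K * F) \ F) : ℝ) ≤ δ * #F := by
  unfold IsFolnerInv
  congr!

theorem IsFolnerInv.mono {K K' F : Finset G} {δ δ' : ℝ} (h : IsFolnerInv K δ F) (hK : K' ⊆ K)
    (hδ : δ ≤ δ') : IsFolnerInv K' δ' F := by
  rw [isFolnerInv_iff] at h ⊢
  calc (#((K' * F) \ F) : ℝ) ≤ #((K * F) \ F) := by
        exact_mod_cast card_le_card (sdiff_subset_sdiff (mul_subset_mul_right hK) le_rfl)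
    _ ≤ δ * #F := h
    _ ≤ δ' * #F := by gcongr

theorem IsFolnerInv.mul_card_sdiff_le {K S F : Finset G} {θ : ℝ}
    (hF : IsFolnerInv K (θ / (#K + 1)) F) (hS : S ⊆ K) :
    (#S : ℝ) * #((S * F) \ F) ≤ θ * #F := by
  have hSK : (#S : ℝ) ≤ #K + 1 := by
    have : (#S : ℝ) ≤ #K := by exact_mod_cast card_le_card hS
    linarith
  calc (#S : ℝ) * #((S * F) \ F) ≤ (#K + 1) * (θ / (#K + 1) * #F) :=
        mul_le_mul hSK (isFolnerInv_iff.1 (hF.mono hS le_rfl)) (by positivity) (by positivity)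
    _ = θ * #F := by field_simp

theorem exists_folner_chain {θ : ℝ} {Q : Finset G → Prop}
    (h : ∀ K : Finset G, ∃ S, S.Nonempty ∧ IsFolnerInv K θ S ∧ Q S) (n : ℕ) :
    ∃ T : ℕ → Finset G, ∀ j < n, (T j).Nonempty ∧ Q (T j) ∧
      ∀ i < j, (#(((T i)⁻¹ * T j) \ T j) : ℝ) ≤ θ * #(T j) := by
  induction n with
  | zero => exact ⟨fun _ => ∅, by simp⟩
  | succ n ih =>
    obtain ⟨T, hT⟩ := ih
    obtain ⟨S, hS, hSK, hQ⟩ := h ((range n).biUnion fun i => (T i)⁻¹)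
    refine ⟨Function.update T n S, fun j hj => ?_⟩
    rcases Nat.lt_succ_iff_lt_or_eq.1 hj with hj | rfl
    · have hold : ∀ i ≤ j, Function.update T n S i = T i :=
        fun i hi => Function.update_of_ne (by omega) _ _
      obtain ⟨hne, hQ, hchain⟩ := hT j hj
      rw [hold j le_rfl]
      exact ⟨hne, hQ, fun i hi => hold i hi.le ▸ hchain i hi⟩
    · rw [Function.update_self]
      refine ⟨hS, hQ, fun i hi => ?_⟩
      rw [Function.update_of_ne hi.ne]
      exact isFolnerInv_iff.1 <|
        hSK.mono (subset_biUnion_of_mem (fun i => (T i)⁻¹) (mem_range.2 hi)) le_rfl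

end Folner

theorem le_sum_of_subset_biUnion {α ι : Type*} [DecidableEq α] {φ : Finset α → ℝ}
    (hpos : ∀ F, 0 ≤ φ F) (hmono : Monotone φ)
    (hsub : ∀ F₁ F₂ : Finset α, φ (F₁ ∪ F₂) ≤ φ F₁ + φ F₂) (s : Finset ι)
    (f : ι → Finset α) {A : Finset α} (hA : A.Nonempty) (hAs : A ⊆ s.biUnion f) :
    φ A ≤ ∑ i ∈ s, φ (f i) := by
  classical
  induction s using Finset.induction_on generalizing A with
  | empty => simp [subset_empty.1 hAs] at hA
  | insert i s hi ih =>
    rw [sum_insert hi]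
    rw [biUnion_insert] at hAs
    by_cases hrest : (A ∩ s.biUnion f).Nonempty
    · calc φ A ≤ φ (f i ∪ A ∩ s.biUnion f) := hmono fun x hx => by
            rcases mem_union.1 (hAs hx) with h | h
            · exact mem_union_left _ h
            · exact mem_union_right _ (mem_inter.2 ⟨hx, h⟩)
        _ ≤ φ (f i) + φ (A ∩ s.biUnion f) := hsub _ _
        _ ≤ φ (f i) + ∑ j ∈ s, φ (f j) := by gcongr; exact ih hrest inter_subset_right
    · have hAi : A ⊆ f i := fun x hx =>
        (mem_union.1 (hAs hx)).resolve_right fun h => hrest ⟨x, mem_inter.2 ⟨hx, h⟩⟩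
      linarith [hmono hAi, sum_nonneg fun j (_ : j ∈ s) => hpos (f j)]

theorem sum_union_image_prodMk {α : Type*} [DecidableEq α] (f : ℕ → ℝ) {P : Finset (ℕ × α)}
    {m : ℕ} (hP : ∀ p ∈ P, p.1 ≠ m) (C : Finset α) :
    ∑ p ∈ P ∪ C.image (m, ·), f p.1 = ∑ p ∈ P, f p.1 + #C * f m := by
  have hdisj : Disjoint P (C.image (m, ·)) := disjoint_left.2 fun p hp hpC => by
    obtain ⟨c, _, rfl⟩ := mem_image.1 hpC
    exact hP _ hp rfl
  rw [sum_union hdisj, sum_image fun _ _ _ _ h => (Prod.ext_iff.1 h).2]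
  simp

section Subadditive

variable {G : Type*} [Group G] [DecidableEq G] {φ : Finset G → ℝ}

theorem apply_singleton_eq (hinv : ∀ (F : Finset G) (g : G), φ (F.image fun x => x * g) = φ F)
    (g : G) : φ {g} = φ {1} := by
  simpa using hinv {1} g

theorem apply_le_card_mul (hpos : ∀ F, 0 ≤ φ F) (hmono : Monotone φ)
    (hinv : ∀ (F : Finset G) (g : G), φ (F.image fun x => x * g) = φ F)
    (hsub : ∀ F₁ F₂ : Finset G, φ (F₁ ∪ F₂) ≤ φ F₁ + φ F₂) {F : Finset G} (hF : F.Nonempty) :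
    φ F ≤ #F * φ {1} :=
  calc φ F ≤ ∑ a ∈ F, φ {a} :=
        le_sum_of_subset_biUnion hpos hmono hsub F singleton hF (biUnion_singleton_eq_self).ge
    _ = #F * φ {1} := by simp [apply_singleton_eq hinv]

end Subadditive

section Packing

variable {G : Type*} [Group G] [DecidableEq G]

def mulInterior (S A : Finset G) : Finset G := {a ∈ A | S * {a} ⊆ A}

theorem card_sdiff_mulInterior_le (S A : Finset G) :
    #(A \ mulInterior S A) ≤ #S * #((S * A) \ A) := by
  have hcover : A \ mulInterior S A ⊆ S.biUnion fun s => {a ∈ A | s * a ∉ A} := by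
    intro a ha
    simp only [mulInterior, mem_sdiff, mem_filter, not_and, not_subset, mem_mul, mem_singleton,
      exists_eq_left] at ha
    obtain ⟨haA, hout⟩ := ha
    obtain ⟨_, ⟨s, hs, rfl⟩, hsa⟩ := hout haA
    exact mem_biUnion.2 ⟨s, hs, mem_filter.2 ⟨haA, hsa⟩⟩
  have hfiber : ∀ s ∈ S, #{a ∈ A | s * a ∉ A} ≤ #((S * A) \ A) := fun s hs =>
    card_le_card_of_injOn (s * ·)
      (fun a ha => by
        rw [coe_filter] at ha
        exact mem_sdiff.2 ⟨mul_mem_mul hs ha.1, ha.2⟩)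
      (fun _ _ _ _ h => mul_left_cancel h)
  calc #(A \ mulInterior S A)
      ≤ ∑ s ∈ S, #{a ∈ A | s * a ∉ A} := (card_le_card hcover).trans card_biUnion_le
    _ ≤ #S * #((S * A) \ A) := by simpa using sum_le_card_nsmul _ _ _ hfiber

theorem sdiff_mulInterior_sdiff_subset (S A U : Finset G) :
    (A \ U) \ mulInterior S (A \ U) ⊆ (A \ mulInterior S A) ∪ ((S⁻¹ * U) \ U) := by
  intro a ha
  simp only [mulInterior, mem_sdiff, mem_filter, not_and, not_subset, mem_mul, mem_singleton,
    exists_eq_left] at ha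
  obtain ⟨⟨haA, haU⟩, hout⟩ := ha
  obtain ⟨_, ⟨s, hs, rfl⟩, hsa⟩ := hout ⟨haA, haU⟩
  by_cases hsaA : s * a ∈ A
  · refine mem_union_right _ (mem_sdiff.2 ⟨?_, haU⟩)
    simpa using mul_mem_mul (inv_mem_inv hs) (not_not.1 (hsa hsaA))
  · refine mem_union_left _ (mem_sdiff.2 ⟨haA, fun h => hsaA ?_⟩)
    exact (mem_filter.1 h).2 (mul_mem_mul hs (mem_singleton_self a))

theorem sum_card_mul_singleton_inter_le (S B W : Finset G) :
    ∑ b ∈ B, #(S * {b} ∩ W) ≤ #S * #W := by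
  calc ∑ b ∈ B, #(S * {b} ∩ W)
      = ∑ b ∈ B, ∑ s ∈ S, if s * b ∈ W then 1 else 0 := by
        refine sum_congr rfl fun b _ => ?_
        rw [← card_filter, ← card_image_of_injective {s ∈ S | s * b ∈ W} (mul_left_injective b)]
        congr 1
        ext x
        simp only [mem_inter, mem_mul, mem_singleton, exists_eq_left, mem_image, mem_filter]
        constructor
        · rintro ⟨⟨s, hs, rfl⟩, hW⟩
          exact ⟨s, ⟨hs, hW⟩, rfl⟩
        · rintro ⟨s, ⟨hs, hW⟩, rfl⟩
          exact ⟨⟨s, hs, rfl⟩, hW⟩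
    _ = ∑ s ∈ S, #{b ∈ B | s * b ∈ W} := by rw [sum_comm]; simp only [card_filter]
    _ ≤ ∑ _s ∈ S, #W := sum_le_sum fun s _ =>
        card_le_card_of_injOn (s * ·) (fun b hb => by simp only [coe_filter] at hb; exact hb.2)
          (fun _ _ _ _ h => mul_left_cancel h)
    _ = #S * #W := by rw [sum_const, smul_eq_mul]

theorem exists_packing {S : Finset G} (hS : S.Nonempty) {θ : ℝ} (hθ : θ < 1) (B : Finset G) :
    ∃ C ⊆ B, (1 - θ) * (#S * #C) ≤ #(S * C) ∧ θ * #B ≤ #(S * C) := by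
  set packings := {C ∈ B.powerset | (1 - θ) * (#S * #C) ≤ (#(S * C) : ℝ)}
  obtain ⟨C, hC, hmax⟩ := exists_max_image packings card ⟨∅, by simp [packings]⟩
  rw [mem_filter, mem_powerset] at hC
  have hS₀ : (0 : ℝ) < #S := by exact_mod_cast hS.card_pos
  -- otherwise `insert b C` would be a larger packing
  have hmeet : ∀ b ∈ B, θ * #S ≤ #(S * {b} ∩ (S * C)) := by
    intro b hb
    by_contra! hlt
    by_cases hbC : b ∈ C
    · rw [inter_eq_left.2 (mul_subset_mul_left (singleton_subset_iff.2 hbC)),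
        card_mul_singleton] at hlt
      linarith [mul_lt_of_lt_one_left hS₀ hθ]
    · have hunion : (#(S * insert b C) : ℝ) + #(S * {b} ∩ (S * C)) = #S + #(S * C) := by
        rw [insert_eq, mul_union, ← card_mul_singleton S b]
        exact_mod_cast card_union_add_card_inter _ _
      have hins : insert b C ∈ packings := by
        rw [mem_filter, mem_powerset, card_insert_of_notMem hbC]
        refine ⟨insert_subset hb hC.1, ?_⟩
        push_cast
        linarith [hC.2]
      have := hmax _ hins
      rw [card_insert_of_notMem hbC] at this
      omega
  have hcount : (#B : ℝ) * (θ * #S) ≤ ∑ b ∈ B, (#(S * {b} ∩ (S * C)) : ℝ) := by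
    rw [← nsmul_eq_mul]
    exact card_nsmul_le_sum _ _ _ hmeet
  have hdouble : ∑ b ∈ B, (#(S * {b} ∩ (S * C)) : ℝ) ≤ #S * #(S * C) := by
    exact_mod_cast sum_card_mul_singleton_inter_le S B (S * C)
  refine ⟨C, hC.1, hC.2, le_of_mul_le_mul_left ?_ hS₀⟩
  linarith

theorem exists_centers_card_sdiff_le {S : Finset G} (hS : S.Nonempty) {θ : ℝ} (hθ : θ < 1)
    (X : Finset G) :
    ∃ C, S * C ⊆ X ∧ (1 - θ) * (#S * #C) ≤ #(S * C) ∧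
      #(X \ (S * C)) ≤ (1 - θ) * #X + θ * #(X \ mulInterior S X) := by
  obtain ⟨C, hCB, hpack, hcover⟩ := exists_packing hS hθ (mulInterior S X)
  have hCX : S * C ⊆ X := by
    intro x hx
    obtain ⟨s, hs, c, hc, rfl⟩ := mem_mul.1 hx
    exact (mem_filter.1 (hCB hc)).2 (mul_mem_mul hs (mem_singleton_self c))
  refine ⟨C, hCX, hpack, ?_⟩
  have hint : mulInterior S X ⊆ X := filter_subset _ _
  rw [card_sdiff_of_subset hCX, Nat.cast_sub (card_le_card hCX), card_sdiff_of_subset hint,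
    Nat.cast_sub (card_le_card hint)]
  nlinarith

end Packing

section Quasitiling

variable {G : Type*} [Group G] [DecidableEq G]

def tiles (T : ℕ → Finset G) (P : Finset (ℕ × G)) : Finset G :=
  P.biUnion fun p => T p.1 * {p.2}

theorem tiles_union (T : ℕ → Finset G) (P Q : Finset (ℕ × G)) :
    tiles T (P ∪ Q) = tiles T P ∪ tiles T Q :=
  union_biUnion

theorem tiles_image_prodMk (T : ℕ → Finset G) (m : ℕ) (C : Finset G) :
    tiles T (C.image (m, ·)) = T m * C := by
  ext x
  simp only [tiles, mem_biUnion, mem_image, mem_mul, mem_singleton, exists_eq_left]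
  constructor
  · rintro ⟨_, ⟨c, hc, rfl⟩, s, hs, rfl⟩
    exact ⟨s, hs, c, hc, rfl⟩
  · rintro ⟨s, hs, c, hc, rfl⟩
    exact ⟨_, ⟨c, hc, rfl⟩, s, hs, rfl⟩

theorem card_mul_tiles_sdiff_le (R : Finset G) (T : ℕ → Finset G) (P : Finset (ℕ × G)) :
    #((R * tiles T P) \ tiles T P) ≤ ∑ p ∈ P, #((R * T p.1) \ T p.1) := by
  have hcover : (R * tiles T P) \ tiles T P ⊆
      P.biUnion fun p => (R * (T p.1 * {p.2})) \ (T p.1 * {p.2}) := by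
    intro x hx
    obtain ⟨hxR, hxT⟩ := mem_sdiff.1 hx
    obtain ⟨r, hr, y, hy, rfl⟩ := mem_mul.1 hxR
    obtain ⟨p, hp, hyp⟩ := mem_biUnion.1 hy
    exact mem_biUnion.2 ⟨p, hp, mem_sdiff.2
      ⟨mul_mem_mul hr hyp, fun h => hxT (mem_biUnion.2 ⟨p, hp, h⟩)⟩⟩
  refine (card_le_card hcover).trans (card_biUnion_le.trans (sum_le_sum fun p _ => ?_))
  rw [← mul_assoc, mul_singleton, mul_singleton, ← smul_finset_sdiff, card_smul_finset]

theorem card_sdiff_mulInterior_sdiff_tiles_le (S A : Finset G) (T : ℕ → Finset G)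
    (P : Finset (ℕ × G)) :
    #((A \ tiles T P) \ mulInterior S (A \ tiles T P)) ≤
      #S * #((S * A) \ A) + ∑ p ∈ P, #((S⁻¹ * T p.1) \ T p.1) :=
  (card_le_card (sdiff_mulInterior_sdiff_subset S A _)).trans <| (card_union_le _ _).trans <|
    add_le_add (card_sdiff_mulInterior_le S A) (card_mul_tiles_sdiff_le _ T P)

theorem card_sdiff_mulInterior_sdiff_tiles_le_mul {θ : ℝ} (hθ₀ : 0 < θ) (hθ : θ ≤ 1 / 2)
    {S A : Finset G} (hSA : (#S : ℝ) * #((S * A) \ A) ≤ θ * #A) {T : ℕ → Finset G}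
    {P : Finset (ℕ × G)} (hPS : ∀ p ∈ P, (#((S⁻¹ * T p.1) \ T p.1) : ℝ) ≤ θ * #(T p.1))
    (hPA : tiles T P ⊆ A) (hPcount : (1 - θ) * ∑ p ∈ P, (#(T p.1) : ℝ) ≤ #(tiles T P)) :
    (#((A \ tiles T P) \ mulInterior S (A \ tiles T P)) : ℝ) ≤ 3 * θ * #A := by
  have hsum : ∑ p ∈ P, (#(T p.1) : ℝ) ≤ 2 * #A := by
    have : (#(tiles T P) : ℝ) ≤ #A := by exact_mod_cast card_le_card hPA
    nlinarith
  calc (#((A \ tiles T P) \ mulInterior S (A \ tiles T P)) : ℝ)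
      ≤ #S * #((S * A) \ A) + ∑ p ∈ P, (#((S⁻¹ * T p.1) \ T p.1) : ℝ) := by
        exact_mod_cast card_sdiff_mulInterior_sdiff_tiles_le S A T P
    _ ≤ θ * #A + θ * ∑ p ∈ P, (#(T p.1) : ℝ) := by
        rw [mul_sum]
        exact add_le_add hSA (sum_le_sum hPS)
    _ ≤ 3 * θ * #A := by nlinarith

theorem exists_quasitiling {θ : ℝ} (hθ₀ : 0 < θ) (hθ : θ ≤ 1 / 2) {n : ℕ} {T : ℕ → Finset G}
    (hT : ∀ m < n, (T m).Nonempty)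
    (hchain : ∀ i j, i < j → j < n → (#(((T i)⁻¹ * T j) \ T j) : ℝ) ≤ θ * #(T j))
    {A : Finset G} (hA : ∀ m < n, (#(T m) : ℝ) * #((T m * A) \ A) ≤ θ * #A) :
    ∀ k ≤ n, ∃ P : Finset (ℕ × G), (∀ p ∈ P, n - k ≤ p.1 ∧ p.1 < n) ∧ tiles T P ⊆ A ∧
      (1 - θ) * ∑ p ∈ P, (#(T p.1) : ℝ) ≤ #(tiles T P) ∧
      (#(A \ tiles T P) : ℝ) ≤ ((1 - θ) ^ k + 3 * θ) * #A := by
  intro k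
  induction k with
  | zero =>
    intro _
    refine ⟨∅, by simp, by simp [tiles], by simp [tiles], ?_⟩
    simp only [tiles, biUnion_empty, sdiff_empty, pow_zero]
    nlinarith [(#A).cast_nonneg (α := ℝ)]
  | succ k ih =>
    intro hk
    obtain ⟨P, hPidx, hPA, hPcount, hPuncov⟩ := ih (by omega)
    set m := n - (k + 1)
    have hm : m < n := by omega
    set U := tiles T P
    obtain ⟨C, hCX, hCpack, hCuncov⟩ :=
      exists_centers_card_sdiff_le (θ := θ) (hT m hm) (by linarith) (A \ U)
    have hboundary := card_sdiff_mulInterior_sdiff_tiles_le_mul hθ₀ hθ (hA m hm)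
      (fun p hp => hchain m p.1 (by have := hPidx p hp; omega) (hPidx p hp).2) hPA hPcount
    have hdisjU : Disjoint U (T m * C) := disjoint_of_subset_right hCX disjoint_sdiff
    refine ⟨P ∪ C.image (m, ·), fun p hp => ?_, ?_, ?_, ?_⟩
    · rcases mem_union.1 hp with hp | hp
      · have := hPidx p hp; omega
      · obtain ⟨c, _, rfl⟩ := mem_image.1 hp; exact ⟨le_rfl, hm⟩
    · rw [tiles_union, tiles_image_prodMk]
      exact union_subset hPA (hCX.trans sdiff_subset)
    · rw [tiles_union, tiles_image_prodMk, card_union_of_disjoint hdisjU,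
        sum_union_image_prodMk (fun j => (#(T j) : ℝ)) (fun p hp => by have := hPidx p hp; omega)]
      push_cast
      linarith
    · rw [tiles_union, tiles_image_prodMk, sdiff_union_distrib, ← Finset.sdiff_sdiff_left']
      calc (#((A \ U) \ (T m * C)) : ℝ)
          ≤ (1 - θ) * #(A \ U) + θ * (3 * θ * #A) := by nlinarith
        _ ≤ (1 - θ) * (((1 - θ) ^ k + 3 * θ) * #A) + θ * (3 * θ * #A) := by gcongr; linarith
        _ = ((1 - θ) ^ (k + 1) + 3 * θ) * #A := by ring

end Quasitiling

theorem le_one_add_two_mul_of_one_sub_mul_le {θ x y : ℝ} (hθ₀ : 0 ≤ θ) (hθ : θ ≤ 1 / 2)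
    (hx : 0 ≤ x) (h : (1 - θ) * x ≤ y) : x ≤ (1 + 2 * θ) * y := by
  nlinarith [mul_nonneg (mul_nonneg hθ₀ (by linarith : 0 ≤ 1 - 2 * θ)) hx]

section Density

variable {G : Type*} [Group G] [DecidableEq G] {φ : Finset G → ℝ}

theorem apply_le_of_tiles (hpos : ∀ F, 0 ≤ φ F) (hmono : Monotone φ)
    (hinv : ∀ (F : Finset G) (g : G), φ (F.image fun x => x * g) = φ F)
    (hsub : ∀ F₁ F₂ : Finset G, φ (F₁ ∪ F₂) ≤ φ F₁ + φ F₂) {T : ℕ → Finset G}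
    {P : Finset (ℕ × G)} {β : ℝ} (hT : ∀ p ∈ P, φ (T p.1) ≤ β * #(T p.1)) {F : Finset G}
    (hF : F.Nonempty) :
    φ F ≤ β * ∑ p ∈ P, (#(T p.1) : ℝ) + #(F \ tiles T P) * φ {1} := by
  have hcover : F ⊆ (P.disjSum (F \ tiles T P)).biUnion
      (Sum.elim (fun p => T p.1 * {p.2}) singleton) := by
    intro x hx
    by_cases hxP : x ∈ tiles T P
    · obtain ⟨p, hp, hxp⟩ := mem_biUnion.1 hxP
      exact mem_biUnion.2 ⟨Sum.inl p, inl_mem_disjSum.2 hp, hxp⟩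
    · exact mem_biUnion.2 ⟨Sum.inr x, inr_mem_disjSum.2 (mem_sdiff.2 ⟨hx, hxP⟩),
        mem_singleton_self x⟩
  have htile : ∀ p ∈ P, φ (T p.1 * {p.2}) ≤ β * #(T p.1) := fun p hp =>
    ((congrArg φ image₂_singleton_right).trans (hinv (T p.1) p.2)).trans_le (hT p hp)
  calc φ F ≤ ∑ x ∈ P.disjSum (F \ tiles T P), φ (Sum.elim (fun p => T p.1 * {p.2}) singleton x) :=
        le_sum_of_subset_biUnion hpos hmono hsub _ _ hF hcover
    _ = ∑ p ∈ P, φ (T p.1 * {p.2}) + ∑ a ∈ F \ tiles T P, φ {a} := sum_disjSum _ _ _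
    _ ≤ β * ∑ p ∈ P, (#(T p.1) : ℝ) + #(F \ tiles T P) * φ {1} := by
        rw [mul_sum]
        gcongr with p hp
        · exact htile p hp
        · simp [apply_singleton_eq hinv]

theorem exists_isFolnerInv_div_le (hpos : ∀ F, 0 ≤ φ F) (hmono : Monotone φ)
    (hinv : ∀ (F : Finset G) (g : G), φ (F.image fun x => x * g) = φ F)
    (hsub : ∀ F₁ F₂ : Finset G, φ (F₁ ∪ F₂) ≤ φ F₁ + φ F₂) {b : ℝ} (hb : 0 ≤ b)
    (hgood : ∀ (K : Finset G) (δ ε : ℝ), 0 < δ → 0 < ε →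
      ∃ S, S.Nonempty ∧ IsFolnerInv K δ S ∧ φ S ≤ (b + ε) * #S)
    {ε : ℝ} (hε : 0 < ε) :
    ∃ (K : Finset G) (δ : ℝ), 0 < δ ∧
      ∀ F : Finset G, F.Nonempty → IsFolnerInv K δ F → φ F / #F ≤ b + ε := by
  set c := φ {1}
  have hc : 0 ≤ c := hpos _
  obtain ⟨θ', hθ'₀, hθ'⟩ := exists_pos_mul_lt (half_pos hε) (2 * b + 4 * c + ε)
  set θ := min (1 / 2) θ'
  have hθ₀ : 0 < θ := by positivity
  have hθ : θ ≤ 1 / 2 := min_le_left _ _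
  have hθε : θ * (2 * b + 4 * c + ε) ≤ ε / 2 := by
    nlinarith [min_le_right (1 / 2) θ']
  obtain ⟨n, hn⟩ := exists_pow_lt_of_lt_one hθ₀ (by linarith : 1 - θ < 1)
  obtain ⟨T, hT⟩ := exists_folner_chain (Q := fun S => φ S ≤ (b + ε / 4) * #S)
    (fun K => hgood K θ (ε / 4) hθ₀ (by positivity)) n
  set K := (range n).biUnion T
  refine ⟨K, θ / (#K + 1), by positivity, fun F hF hFK => ?_⟩
  obtain ⟨P, hPidx, hPF, hPcount, hPuncov⟩ := exists_quasitiling hθ₀ hθ (fun m hm => (hT m hm).1)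
    (fun i j hij hj => (hT j hj).2.2 i hij)
    (fun m hm => hFK.mul_card_sdiff_le (subset_biUnion_of_mem T (mem_range.2 hm))) n le_rfl
  have hF₀ : (0 : ℝ) < #F := by exact_mod_cast hF.card_pos
  have hPF' : (#(tiles T P) : ℝ) ≤ #F := by exact_mod_cast card_le_card hPF
  have hsum : ∑ p ∈ P, (#(T p.1) : ℝ) ≤ (1 + 2 * θ) * #F :=
    le_one_add_two_mul_of_one_sub_mul_le hθ₀.le hθ (sum_nonneg fun _ _ => Nat.cast_nonneg _)
      (hPcount.trans hPF')
  have huncov : (#(F \ tiles T P) : ℝ) ≤ 4 * θ * #F := by nlinarith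
  rw [div_le_iff₀ hF₀]
  calc φ F ≤ (b + ε / 4) * ∑ p ∈ P, (#(T p.1) : ℝ) + #(F \ tiles T P) * c :=
        apply_le_of_tiles hpos hmono hinv hsub (fun p hp => (hT p.1 (hPidx p hp).2).2.1) hF
    _ ≤ (b + ε / 4) * ((1 + 2 * θ) * #F) + 4 * θ * #F * c := by gcongr
    _ = (b + ε / 4 + θ * (2 * b + ε / 2 + 4 * c)) * #F := by ring
    _ ≤ (b + ε) * #F := mul_le_mul_of_nonneg_right (by nlinarith) hF₀.le

theorem exists_eventual_lower_bound (hG : ∀ (K : Finset G) (δ : ℝ), 0 < δ →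
      ∃ F : Finset G, F.Nonempty ∧ IsFolnerInv K δ F)
    (hpos : ∀ F, 0 ≤ φ F) (hmono : Monotone φ)
    (hinv : ∀ (F : Finset G) (g : G), φ (F.image fun x => x * g) = φ F)
    (hsub : ∀ F₁ F₂ : Finset G, φ (F₁ ∪ F₂) ≤ φ F₁ + φ F₂) :
    ∃ b : ℝ, 0 ≤ b ∧
      (∀ ε : ℝ, 0 < ε → ∃ (K : Finset G) (δ : ℝ), 0 < δ ∧
        ∀ F : Finset G, F.Nonempty → IsFolnerInv K δ F → b - ε ≤ φ F / #F) ∧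
      ∀ (K : Finset G) (δ ε : ℝ), 0 < δ → 0 < ε →
        ∃ S, S.Nonempty ∧ IsFolnerInv K δ S ∧ φ S ≤ (b + ε) * #S := by
  set L := {x : ℝ | ∃ (K : Finset G) (δ : ℝ), 0 < δ ∧
    ∀ F : Finset G, F.Nonempty → IsFolnerInv K δ F → x ≤ φ F / #F}
  have hL₀ : (0 : ℝ) ∈ L := ⟨∅, 1, one_pos, fun F _ _ => div_nonneg (hpos F) (Nat.cast_nonneg _)⟩
  have hL : BddAbove L := by
    refine ⟨φ {1}, fun x ⟨K, δ, hδ, hx⟩ => ?_⟩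
    obtain ⟨F, hF, hFK⟩ := hG K δ hδ
    refine (hx F hF hFK).trans ((div_le_iff₀ (by exact_mod_cast hF.card_pos)).2 ?_)
    linarith [apply_le_card_mul hpos hmono hinv hsub hF]
  refine ⟨sSup L, le_csSup hL hL₀, fun ε hε => ?_, fun K δ ε hδ hε => ?_⟩
  · obtain ⟨x, ⟨K, δ, hδ, hx⟩, hlt⟩ := exists_lt_of_lt_csSup ⟨0, hL₀⟩ (sub_lt_self (sSup L) hε)
    exact ⟨K, δ, hδ, fun F hF hFK => hlt.le.trans (hx F hF hFK)⟩
  · by_contra! hbad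
    have : sSup L + ε ∈ L := ⟨K, δ, hδ, fun F hF hFK =>
      (le_div_iff₀ (by exact_mod_cast hF.card_pos)).2 (hbad F hF hFK).le⟩
    linarith [le_csSup hL this]

end Density

theorem stmt2_general {G : Type*} [Group G] [DecidableEq G]
    (hG : ∀ (K : Finset G) (δ : ℝ), 0 < δ → ∃ F : Finset G, F.Nonempty ∧ IsFolnerInv K δ F)
    (φ : Finset G → ℝ) (hpos : ∀ F, 0 ≤ φ F)
    (hmono : ∀ F₁ F₂ : Finset G, F₁ ⊆ F₂ → φ F₁ ≤ φ F₂)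
    (hinv : ∀ (F : Finset G) (g : G), φ (F.image fun x => x * g) = φ F)
    (hsub : ∀ F₁ F₂ : Finset G, φ (F₁ ∪ F₂) ≤ φ F₁ + φ F₂) :
    ∃ b : ℝ, 0 ≤ b ∧ ∀ ε : ℝ, 0 < ε → ∃ (K : Finset G) (δ : ℝ), 0 < δ ∧
      ∀ F : Finset G, F.Nonempty → IsFolnerInv K δ F → |b - φ F / F.card| ≤ ε := by
  obtain ⟨b, hb, hlower, hgood⟩ := exists_eventual_lower_bound hG hpos hmono hinv hsub
  refine ⟨b, hb, fun ε hε => ?_⟩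
  obtain ⟨K₀, δ₀, hδ₀, h₀⟩ := hlower ε hε
  obtain ⟨K₁, δ₁, hδ₁, h₁⟩ := exists_isFolnerInv_div_le hpos hmono hinv hsub hb hgood hε
  refine ⟨K₀ ∪ K₁, min δ₀ δ₁, lt_min hδ₀ hδ₁, fun F hF hFK => abs_sub_le_iff.2 ⟨?_, ?_⟩⟩
  · linarith [h₀ F hF (hFK.mono subset_union_left (min_le_left _ _))]
  · linarith [h₁ F hF (hFK.mono subset_union_right (min_le_right _ _))]

theorem stmt2 {G : Type*} [Group G] [Countable G] [DecidableEq G]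
    (hG : ∀ (K : Finset G) (δ : ℝ), 0 < δ → ∃ F : Finset G, F.Nonempty ∧ IsFolnerInv K δ F)
    (φ : Finset G → ℝ) (hpos : ∀ F, 0 ≤ φ F)
    (hmono : ∀ F₁ F₂ : Finset G, F₁ ⊆ F₂ → φ F₁ ≤ φ F₂)
    (hinv : ∀ (F : Finset G) (g : G), φ (F.image fun x => x * g) = φ F)
    (hsub : ∀ F₁ F₂ : Finset G, φ (F₁ ∪ F₂) ≤ φ F₁ + φ F₂) :
    ∃ b : ℝ, 0 ≤ b ∧ ∀ ε : ℝ, 0 < ε → ∃ (K : Finset G) (δ : ℝ), 0 < δ ∧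
      ∀ F : Finset G, F.Nonempty → IsFolnerInv K δ F → |b - φ F / F.card| ≤ ε :=
  stmt2_general hG φ hpos hmono hinv hsub
end

section
/- Let G be a countable amenable group and m ≥ 1. The shift action of G on ([0,1]^m)^G has mean dimension at most m. -/
open scoped Pointwise ENNReal

section Star
variable {C : Type*} [Fintype C]

/-- Open star of the vertex `v` in the (Freudenthal) triangulation of `ℝ^C`. -/
def starSet (v : C → ℤ) : Set (C → ℝ) :=
  {x | (∀ c, |x c - v c| < 1) ∧ ∀ c c', x c' - v c' < 0 ∨ x c' - v c' < x c - v c + 1}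

lemma isOpen_starSet (v : C → ℤ) : IsOpen (starSet v) := by
  have : starSet v = (⋂ c, {x : C → ℝ | |x c - v c| < 1}) ∩
      ⋂ c, ⋂ c', ({x : C → ℝ | x c' - v c' < 0} ∪
        {x : C → ℝ | x c' - v c' < x c - v c + 1}) := by
    ext x
    simp only [starSet, Set.mem_setOf_eq, Set.mem_inter_iff, Set.mem_iInter, Set.mem_union]
  rw [this]
  apply IsOpen.inter
  · exact isOpen_iInter_of_finite fun c =>
      (continuous_abs.comp ((continuous_apply c).sub continuous_const)).isOpen_preimage
        (Set.Iio 1) isOpen_Iio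
  · refine isOpen_iInter_of_finite fun c => isOpen_iInter_of_finite fun c' => IsOpen.union ?_ ?_
    · exact ((continuous_apply c').sub continuous_const).isOpen_preimage (Set.Iio 0) isOpen_Iio
    · have : {x : C → ℝ | x c' - v c' < x c - v c + 1}
          = {x : C → ℝ | 0 < (x c - v c + 1) - (x c' - v c')} := by
        ext x; simp only [Set.mem_setOf_eq]; constructor <;> intro h <;> linarith
      rw [this]
      exact (((((continuous_apply c).sub continuous_const).add continuous_const).sub
        ((continuous_apply c').sub continuous_const))).isOpen_preimage (Set.Ioi 0) isOpen_Ioi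

omit [Fintype C] in
lemma mem_starSet_floor (x : C → ℝ) : x ∈ starSet (fun c => ⌊x c⌋) := by
  constructor
  · intro c
    have h1 := Int.floor_le (x c)
    have h2 := Int.lt_floor_add_one (x c)
    rw [abs_lt]; constructor <;> linarith
  · intro c c'
    right
    have h1 := Int.floor_le (x c)
    have h2 := Int.lt_floor_add_one (x c')
    linarith

omit [Fintype C] in
lemma starSet_v_eq {v : C → ℤ} {x : C → ℝ} (hx : x ∈ starSet v) (c : C) :
    v c = ⌊x c⌋ + (if x c - v c < 0 then 1 else 0) := by
  have h := hx.1 c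
  rw [abs_lt] at h
  by_cases hc : x c - v c < 0
  · simp only [hc, if_pos]
    have h1 : x c < (v c : ℝ) := by linarith
    have hf1 : ⌊x c⌋ < v c := Int.floor_lt.mpr h1
    have hf2 : v c ≤ ⌊x c⌋ + 1 := by
      have hfl := Int.lt_floor_add_one (x c)
      have h2 : (v c : ℝ) < (⌊x c⌋ : ℝ) + 2 := by linarith
      have : (v c : ℤ) < ⌊x c⌋ + 2 := by exact_mod_cast h2
      omega
    omega
  · simp only [hc, if_neg, not_false_iff, add_zero]
    push_neg at hc
    symm
    rw [Int.floor_eq_iff]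
    constructor <;> [linarith; linarith]

omit [Fintype C] in
lemma starSet_chain {v w : C → ℤ} {x : C → ℝ} (hv : x ∈ starSet v) (hw : x ∈ starSet w) :
    {c | x c - v c < 0} ⊆ {c | x c - w c < 0} ∨ {c | x c - w c < 0} ⊆ {c | x c - v c < 0} := by
  by_contra hcon
  push_neg at hcon
  obtain ⟨i, hiv, hiw⟩ := Set.not_subset.mp hcon.1
  obtain ⟨j, hjw, hjv⟩ := Set.not_subset.mp hcon.2
  simp only [Set.mem_setOf_eq] at hiv hiw hjw hjv
  push_neg at hiw hjv
  have h1 := (hv.2 i j).resolve_left (by push_neg; exact hjv)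
  have h2 := (hw.2 j i).resolve_left (by push_neg; exact hiw)
  have evi := starSet_v_eq hv i
  have evj := starSet_v_eq hv j
  have ewi := starSet_v_eq hw i
  have ewj := starSet_v_eq hw j
  rw [if_pos hiv] at evi
  rw [if_neg (not_lt.mpr hjv)] at evj
  rw [if_pos hjw] at ewj
  rw [if_neg (not_lt.mpr hiw)] at ewi
  rw [add_zero] at evj ewi
  have rvi : ((v i : ℝ)) = (⌊x i⌋ : ℝ) + 1 := by exact_mod_cast congrArg (fun z : ℤ => (z : ℝ)) evi
  have rvj : ((v j : ℝ)) = (⌊x j⌋ : ℝ) := by exact_mod_cast congrArg (fun z : ℤ => (z : ℝ)) evj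
  have rwj : ((w j : ℝ)) = (⌊x j⌋ : ℝ) + 1 := by exact_mod_cast congrArg (fun z : ℤ => (z : ℝ)) ewj
  have rwi : ((w i : ℝ)) = (⌊x i⌋ : ℝ) := by exact_mod_cast congrArg (fun z : ℤ => (z : ℝ)) ewi
  rw [rvi, rvj] at h1
  rw [rwi, rwj] at h2
  linarith

open Classical in
lemma starSet_valid_finite_ncard (x : C → ℝ) :
    {v : C → ℤ | x ∈ starSet v}.Finite ∧
      {v : C → ℤ | x ∈ starSet v}.ncard ≤ Fintype.card C + 1 := by
  classical
  set V := {v : C → ℤ | x ∈ starSet v} with hV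
  set n := Fintype.card C with hn
  set f : (C → ℤ) → Fin (n + 1) :=
    fun v => ⟨min (Finset.univ.filter (fun c => x c - v c < 0)).card n, by omega⟩ with hf
  have hcard : ∀ v : C → ℤ, (Finset.univ.filter (fun c => x c - v c < 0)).card ≤ n := fun v => by
    simpa [hn] using Finset.card_filter_le Finset.univ (fun c => x c - v c < 0)
  have hinj : Set.InjOn f V := by
    intro v hv w hw hvw
    have hveq : (Finset.univ.filter (fun c => x c - v c < 0)).card
        = (Finset.univ.filter (fun c => x c - w c < 0)).card := by
      have h1 := hcard v
      have h2 := hcard w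
      have h3 := congrArg Fin.val hvw
      simp only [hf] at h3
      omega
    have hchain := starSet_chain hv hw
    have hTeq : (Finset.univ.filter (fun c => x c - v c < 0))
        = (Finset.univ.filter (fun c => x c - w c < 0)) := by
      rcases hchain with h | h
      · refine Finset.eq_of_subset_of_card_le ?_ hveq.ge
        intro a ha
        exact Finset.mem_filter.mpr ⟨Finset.mem_univ a, h (Finset.mem_filter.mp ha).2⟩
      · refine (Finset.eq_of_subset_of_card_le ?_ hveq.le).symm
        intro a ha
        exact Finset.mem_filter.mpr ⟨Finset.mem_univ a, h (Finset.mem_filter.mp ha).2⟩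
    funext c
    have hv' := starSet_v_eq hv c
    have hw' := starSet_v_eq hw c
    have hiff : (x c - v c < 0) ↔ (x c - w c < 0) := by
      constructor <;> intro h
      · have hmem : c ∈ Finset.univ.filter (fun c => x c - w c < 0) := by
          rw [← hTeq]; exact Finset.mem_filter.mpr ⟨Finset.mem_univ c, h⟩
        exact (Finset.mem_filter.mp hmem).2
      · have hmem : c ∈ Finset.univ.filter (fun c => x c - v c < 0) := by
          rw [hTeq]; exact Finset.mem_filter.mpr ⟨Finset.mem_univ c, h⟩
        exact (Finset.mem_filter.mp hmem).2
    by_cases hcv : x c - v c < 0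
    · rw [if_pos hcv] at hv'; rw [if_pos (hiff.mp hcv)] at hw'; omega
    · rw [if_neg hcv] at hv'; rw [if_neg (fun hh => hcv (hiff.mpr hh))] at hw'; omega
  have hfin : V.Finite := Set.Finite.of_finite_image (Set.toFinite _) hinj
  refine ⟨hfin, ?_⟩
  have := Set.ncard_le_ncard_of_injOn f (fun a _ => Set.mem_univ (f a)) hinj (Set.toFinite _)
  simpa [Set.ncard_univ] using this

end Star

section Unif

lemma isOpen_dball {X : Type*} [TopologicalSpace X] {d : X → X → ℝ}
    (hd : IsCompatibleMetric d) (x : X) (r : ℝ) : IsOpen {y | d x y < r} := by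
  rw [hd.2.2.2.2]
  intro z hz
  refine ⟨r - d x z, by simpa using hz, fun y hy => ?_⟩
  simp only [Set.mem_setOf_eq] at hy ⊢
  have := hd.2.2.2.1 x z y
  linarith

lemma isOpen_dlt {X : Type*} [TopologicalSpace X] {d : X → X → ℝ}
    (hd : IsCompatibleMetric d) (r : ℝ) : IsOpen {p : X × X | d p.1 p.2 < r} := by
  rw [isOpen_prod_iff]
  intro a b hab
  simp only [Set.mem_setOf_eq] at hab
  refine ⟨{y | d a y < (r - d a b) / 2}, {y | d b y < (r - d a b) / 2},
    isOpen_dball hd a _, isOpen_dball hd b _, by simp [(hd.2.1 a a).mpr rfl]; linarith,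
    by simp [(hd.2.1 b b).mpr rfl]; linarith, ?_⟩
  rintro ⟨y, z⟩ ⟨hy, hz⟩
  simp only [Set.mem_setOf_eq] at hy hz ⊢
  have t1 := hd.2.2.2.1 y a z
  have t2 := hd.2.2.2.1 a b z
  have s1 : d y a = d a y := hd.2.2.1 y a
  linarith

/-- Uniform continuity: closeness on finitely many coordinates forces `d`-closeness. -/
lemma unif_cont {G : Type*} [Group G] {m : ℕ}
    {d : (G → Fin m → unitInterval) → (G → Fin m → unitInterval) → ℝ}
    (hd : IsCompatibleMetric d) {ε : ℝ} (hε : 0 < ε) :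
    ∃ (E : Finset G) (δ : ℝ), 0 < δ ∧ ∀ x y : G → Fin m → unitInterval,
      (∀ g ∈ E, ∀ i, |(x g i : ℝ) - (y g i : ℝ)| ≤ δ) → d x y < ε := by
  classical
  set D := {p : (G → Fin m → unitInterval) × (G → Fin m → unitInterval) | ε ≤ d p.1 p.2} with hD
  have hDc : IsClosed D := by
    have : D = {p : (G → Fin m → unitInterval) × (G → Fin m → unitInterval) | d p.1 p.2 < ε}ᶜ := by
      ext p; simp [hD, not_lt]
    rw [this]
    exact (isOpen_dlt hd ε).isClosed_compl
  have hDcompact : IsCompact D := hDc.isCompact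
  set V : G × Fin m × ℕ → Set ((G → Fin m → unitInterval) × (G → Fin m → unitInterval)) :=
    fun c => {p : (G → Fin m → unitInterval) × (G → Fin m → unitInterval) | 1 / ((c.2.2 : ℝ) + 1) < |(p.1 c.1 c.2.1 : ℝ) - (p.2 c.1 c.2.1 : ℝ)|}
    with hV
  have hVopen : ∀ c, IsOpen (V c) := by
    intro c
    have hcont : Continuous fun p : (G → Fin m → unitInterval) × (G → Fin m → unitInterval) => |(p.1 c.1 c.2.1 : ℝ) - (p.2 c.1 c.2.1 : ℝ)| := by
      apply continuous_abs.comp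
      apply Continuous.sub
      · exact (continuous_subtype_val.comp ((continuous_apply c.2.1).comp
          ((continuous_apply c.1).comp continuous_fst)))
      · exact (continuous_subtype_val.comp ((continuous_apply c.2.1).comp
          ((continuous_apply c.1).comp continuous_snd)))
    exact hcont.isOpen_preimage (Set.Ioi _) isOpen_Ioi
  have hcover : D ⊆ ⋃ c, V c := by
    rintro ⟨x, y⟩ hp
    simp only [hD, Set.mem_setOf_eq] at hp
    have hne : x ≠ y := by
      intro h
      rw [h, (hd.2.1 y y).mpr rfl] at hp
      linarith
    have : ∃ g i, x g i ≠ y g i := by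
      by_contra hco
      push_neg at hco
      exact hne (funext fun g => funext fun i => hco g i)
    obtain ⟨g, i, hgi⟩ := this
    have habs : 0 < |(x g i : ℝ) - (y g i : ℝ)| := by
      rw [abs_pos, sub_ne_zero]
      exact fun h => hgi (Subtype.ext h)
    obtain ⟨k, hk⟩ := exists_nat_one_div_lt habs
    refine Set.mem_iUnion.mpr ⟨(g, i, k), ?_⟩
    simpa [hV] using hk
  obtain ⟨t, ht⟩ := hDcompact.elim_finite_subcover V hVopen hcover
  set M := t.sup (fun c => c.2.2) with hM
  refine ⟨t.image Prod.fst, 1 / ((M : ℝ) + 1), by positivity, ?_⟩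
  intro x y hxy
  by_contra hcon
  push_neg at hcon
  have hmem : (x, y) ∈ D := hcon
  obtain ⟨c, hct, hcV⟩ := Set.mem_iUnion₂.mp (ht hmem)
  simp only [hV, Set.mem_setOf_eq] at hcV
  have hg : c.1 ∈ t.image Prod.fst := Finset.mem_image_of_mem _ hct
  have hle : |(x c.1 c.2.1 : ℝ) - (y c.1 c.2.1 : ℝ)| ≤ 1 / ((M : ℝ) + 1) := hxy c.1 hg c.2.1
  have hMle : (c.2.2 : ℝ) ≤ (M : ℝ) := by
    exact_mod_cast Finset.le_sup (f := fun c => c.2.2) hct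
  have : 1 / ((M : ℝ) + 1) ≤ 1 / ((c.2.2 : ℝ) + 1) := by
    apply one_div_le_one_div_of_le <;> [positivity; linarith]
  linarith

end Unif

lemma widim_cover_bound {G : Type*} [Group G] [DecidableEq G] {m : ℕ}
    {d : (G → Fin m → unitInterval) → (G → Fin m → unitInterval) → ℝ}
    {ε δ : ℝ} (hε : 0 ≤ ε) (hδ : 0 < δ) (E : Finset G)
    (hEδ : ∀ x y : G → Fin m → unitInterval,
      (∀ g ∈ E, ∀ i, |(x g i : ℝ) - (y g i : ℝ)| ≤ δ) → d x y < ε)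
    (F : Finset G) :
    widim (dynMetric (shiftAction G (Fin m → unitInterval)) d F) ε ≤ m * (F⁻¹ * E).card := by
  classical
  set A : Finset G := F⁻¹ * E with hA
  set N : ℕ := ⌈2 / δ⌉₊ + 1 with hNdef
  have hNpos : (0 : ℝ) < N := by positivity
  have hN2 : 2 / (N : ℝ) ≤ δ := by
    rw [div_le_iff₀ hNpos]
    have h1 : 2 / δ ≤ (N : ℝ) := by
      refine le_trans (Nat.le_ceil _) ?_
      exact_mod_cast Nat.le_succ _
    calc (2 : ℝ) = (2 / δ) * δ := by field_simp
    _ ≤ (N : ℝ) * δ := mul_le_mul_of_nonneg_right h1 hδ.le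
    _ = δ * N := mul_comm _ _
  set Φ : (G → Fin m → unitInterval) → (({a // a ∈ A} × Fin m) → ℝ) :=
    fun x c => (N : ℝ) * (x c.1.1 c.2 : ℝ) with hΦ
  have hΦcont : Continuous Φ := by
    apply continuous_pi
    intro c
    exact continuous_const.mul (continuous_subtype_val.comp
      ((continuous_apply c.2).comp (continuous_apply c.1.1)))
  set S : (({a // a ∈ A} × Fin m) → ℤ) → Set (G → Fin m → unitInterval) :=
    fun w => Φ ⁻¹' starSet w with hS
  have hSopen : ∀ w, IsOpen (S w) := fun w => (isOpen_starSet w).preimage hΦcont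
  set U : (({a // a ∈ A} × Fin m) → Fin (N + 1)) → Set (G → Fin m → unitInterval) :=
    fun v => S (fun c => ((v c : ℕ) : ℤ)) with hU
  set 𝒰 : Finset (Set (G → Fin m → unitInterval)) := Finset.image U Finset.univ with h𝒰
  apply Nat.sInf_le
  refine ⟨𝒰, ?_, ?_, ?_, ?_⟩
  · intro U' hU'
    obtain ⟨v, _, rfl⟩ := Finset.mem_image.mp hU'
    exact hSopen _
  · intro x
    have hbd : ∀ c, 0 ≤ ⌊Φ x c⌋ ∧ ⌊Φ x c⌋ ≤ N := by
      intro c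
      constructor
      · apply Int.floor_nonneg.mpr
        exact mul_nonneg hNpos.le (x c.1.1 c.2).2.1
      · have : Φ x c ≤ (N : ℝ) := by
          have := (x c.1.1 c.2).2.2
          calc Φ x c ≤ (N:ℝ) * 1 := mul_le_mul_of_nonneg_left this hNpos.le
          _ = N := mul_one _
        calc ⌊Φ x c⌋ ≤ ⌊(N : ℝ)⌋ := Int.floor_le_floor this
        _ = N := Int.floor_natCast N
    set vx : ({a // a ∈ A} × Fin m) → Fin (N + 1) :=
      fun c => ⟨(⌊Φ x c⌋).toNat, by
        have := (hbd c).1; have := (hbd c).2; omega⟩ with hvx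
    refine ⟨U vx, Finset.mem_image_of_mem U (Finset.mem_univ vx), ?_⟩
    show Φ x ∈ starSet _
    have : (fun c => (((vx c : ℕ)) : ℤ)) = fun c => ⌊Φ x c⌋ := by
      funext c
      simp only [hvx]
      exact Int.toNat_of_nonneg (hbd c).1
    rw [this]
    exact mem_starSet_floor _
  · intro U' hU' x hx y hy
    obtain ⟨v, _, rfl⟩ := Finset.mem_image.mp hU'
    have hclose : ∀ a : G, a ∈ A → ∀ i : Fin m, |(x a i : ℝ) - (y a i : ℝ)| ≤ δ := by
      intro a ha i
      have hx1 := hx.1 (⟨a, ha⟩, i)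
      have hy1 := hy.1 (⟨a, ha⟩, i)
      rw [abs_lt] at hx1 hy1
      simp only [hΦ] at hx1 hy1
      have : (N : ℝ) * |(x a i : ℝ) - (y a i : ℝ)| < 2 := by
        rw [mul_comm, ← abs_of_pos hNpos, ← abs_mul, sub_mul, abs_lt]
        constructor <;> nlinarith
      have h2 : |(x a i : ℝ) - (y a i : ℝ)| < 2 / N := by
        rw [lt_div_iff₀ hNpos, mul_comm]; exact this
      linarith
    show (↑(F.sup fun g => (d _ _).toNNReal) : ℝ) ≤ ε
    have hsup : (F.sup fun g => (d ((shiftAction G (Fin m → unitInterval)).act g x)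
        ((shiftAction G (Fin m → unitInterval)).act g y)).toNNReal) ≤ ε.toNNReal := by
      apply Finset.sup_le
      intro g hg
      apply Real.toNNReal_le_toNNReal
      apply le_of_lt
      apply hEδ
      intro e he i
      show |(x (g⁻¹ * e) i : ℝ) - (y (g⁻¹ * e) i : ℝ)| ≤ δ
      exact hclose (g⁻¹ * e) (Finset.mul_mem_mul (Finset.inv_mem_inv hg) he) i
    calc (↑(F.sup fun g => (d _ _).toNNReal) : ℝ) ≤ (ε.toNNReal : ℝ) := by
          exact_mod_cast hsup
    _ = ε := Real.coe_toNNReal ε hε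
  · intro x
    obtain ⟨hfin, hcnt⟩ := starSet_valid_finite_ncard (Φ x)
    have hsub : {U' : Set (G → Fin m → unitInterval) | U' ∈ 𝒰 ∧ x ∈ U'} ⊆
        S '' {w | Φ x ∈ starSet w} := by
      rintro U' ⟨hU𝒰, hxU⟩
      obtain ⟨v, _, rfl⟩ := Finset.mem_image.mp hU𝒰
      exact ⟨fun c => ((v c : ℕ) : ℤ), hxU, rfl⟩
    have h1 := Set.ncard_le_ncard hsub (hfin.image S)
    have h2 := Set.ncard_image_le hfin (f := S)
    have h3 : Fintype.card ({a // a ∈ A} × Fin m) = A.card * m := by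
      simp [Fintype.card_prod]
    calc {U' : Set (G → Fin m → unitInterval) | U' ∈ 𝒰 ∧ x ∈ U'}.ncard
        ≤ Fintype.card ({a // a ∈ A} × Fin m) + 1 := le_trans h1 (le_trans h2 hcnt)
    _ = m * A.card + 1 := by rw [h3, mul_comm]

theorem stmt6 {G : Type*} [Group G] [Countable G] (m : ℕ) (hm : 1 ≤ m)
    (d : (G → Fin m → unitInterval) → (G → Fin m → unitInterval) → ℝ)
    (hd : IsCompatibleMetric d)
    (Fseq : ℕ → Finset G) (hFseq : IsFolnerSeq Fseq) :
    mdim (shiftAction G (Fin m → unitInterval)) d Fseq ≤ (m : ℝ≥0∞) := by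
  letI := Classical.decEq G
  rw [mdim]
  refine iSup_le fun ε => iSup_le fun hε => ?_
  obtain ⟨E, δ, hδ, hEδ⟩ := unif_cont hd hε
  refine ENNReal.le_of_forall_pos_le_add fun r hr _ => ?_
  have hm0 : (0 : ℝ) < m := by exact_mod_cast Nat.lt_of_lt_of_le Nat.zero_lt_one hm
  set δ' : ℝ := (r : ℝ) / m with hδ'def
  have hδ' : 0 < δ' := div_pos (by exact_mod_cast hr) hm0
  obtain ⟨N₀, hN₀⟩ := hFseq.2 E⁻¹ δ' hδ'
  rw [mdimEps]
  refine Filter.limsup_le_of_le (by isBoundedDefault) ?_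
  rw [Filter.eventually_atTop]
  refine ⟨N₀, fun n hn => ?_⟩
  have hFne : (Fseq n).Nonempty := hFseq.1 n
  have hFcard : 0 < (Fseq n).card := Finset.card_pos.mpr hFne
  have hfol : (((E⁻¹ * Fseq n) \ Fseq n).card : ℝ) ≤ δ' * (Fseq n).card := hN₀ n hn
  have h1 : ((Fseq n)⁻¹ * E).card = (E⁻¹ * Fseq n).card := by
    rw [← Finset.card_inv (((Fseq n))⁻¹ * E), mul_inv_rev, inv_inv]
  have h2 : (E⁻¹ * Fseq n).card ≤ (Fseq n).card + ((E⁻¹ * Fseq n) \ Fseq n).card := by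
    have hsub : E⁻¹ * Fseq n ⊆ Fseq n ∪ ((E⁻¹ * Fseq n) \ Fseq n) := fun a ha => by
      by_cases h : a ∈ Fseq n
      · exact Finset.mem_union_left _ h
      · exact Finset.mem_union_right _ (Finset.mem_sdiff.mpr ⟨ha, h⟩)
    exact le_trans (Finset.card_le_card hsub) (Finset.card_union_le _ _)
  have hAcard : ((((Fseq n))⁻¹ * E).card : ℝ) ≤ (1 + δ') * (Fseq n).card := by
    rw [h1]
    have h2' : ((E⁻¹ * Fseq n).card : ℝ) ≤ ((Fseq n).card : ℝ) + (((E⁻¹ * Fseq n) \ Fseq n).card : ℝ) := by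
      exact_mod_cast h2
    linarith [hfol]
  have hw := widim_cover_bound (le_of_lt hε) hδ E hEδ (Fseq n)
  have hreal : ((widim (dynMetric (shiftAction G (Fin m → unitInterval)) d (Fseq n)) ε : ℝ))
      ≤ ((m : ℝ) + r) * (Fseq n).card := by
    have hw' : ((widim (dynMetric (shiftAction G (Fin m → unitInterval)) d (Fseq n)) ε : ℝ))
        ≤ (m : ℝ) * ((((Fseq n))⁻¹ * E).card : ℝ) := by exact_mod_cast hw
    have hmδ : (m : ℝ) * δ' = r := by
      rw [hδ'def]; field_simp
    calc ((widim (dynMetric (shiftAction G (Fin m → unitInterval)) d (Fseq n)) ε : ℝ))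
        ≤ (m : ℝ) * ((((Fseq n))⁻¹ * E).card : ℝ) := hw'
    _ ≤ (m : ℝ) * ((1 + δ') * (Fseq n).card) :=
        mul_le_mul_of_nonneg_left hAcard hm0.le
    _ = ((m : ℝ) + (m : ℝ) * δ') * (Fseq n).card := by ring
    _ = ((m : ℝ) + r) * (Fseq n).card := by rw [hmδ]
  rw [ENNReal.div_le_iff (by exact_mod_cast hFcard.ne' : ((Fseq n).card : ℝ≥0∞) ≠ 0)
    (ENNReal.natCast_ne_top _)]
  have hcast : ((m : ℝ≥0∞) + (r : ℝ≥0∞)) * ((Fseq n).card : ℝ≥0∞)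
      = ENNReal.ofReal (((m : ℝ) + r) * (Fseq n).card) := by
    rw [ENNReal.ofReal_mul (by positivity), ENNReal.ofReal_add (by positivity) r.coe_nonneg]
    simp [ENNReal.ofReal_natCast, ENNReal.ofReal_coe_nnreal]
  rw [hcast]
  calc ((widim (dynMetric (shiftAction G (Fin m → unitInterval)) d (Fseq n)) ε : ℝ≥0∞))
      = ENNReal.ofReal ((widim (dynMetric (shiftAction G (Fin m → unitInterval)) d (Fseq n)) ε : ℝ)) := by
        rw [ENNReal.ofReal_natCast]
  _ ≤ ENNReal.ofReal (((m : ℝ) + r) * (Fseq n).card) := ENNReal.ofReal_le_ofReal hreal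
end

section
/- Let G be a countable group, (X, d) a compact metric space with an action α : G ↷ X, π : X → Y a continuous map to a compact metrizable space, η > 0, and (c_g)_{g∈G} strictly positive reals with Σ_g c_g = 1. Let f : X → [0,1]^m be continuous such that I_f × π is an η-embedding, where I_f(x) = (f(α_g(x)))_{g∈G}. Define 2δ = inf{ Σ_{g∈G} c_g ‖f(α_g(x)) − f(α_g(y))‖_∞ : x, y ∈ X, π(x) = π(y), d(x,y) ≥ η }. Then δ > 0, and for every continuous f₀ : X → [0,1]^m with ‖f − f₀‖_∞ < δ, the map I_{f₀} × π is also an η-embedding. In particular, the set A_η = { f ∈ C(X, [0,1]^m) : I_f × π is an η-embedding } is open in C(X, [0,1]^m) with the uniform norm. -/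
open scoped Pointwise ENNReal

/-! The pairs `(x, y)` with `π x = π y` and `d(x, y) ≥ η` form a compact set on which the weighted
orbit distance `∑_g c_g ‖f(α_g x) − f(α_g y)‖` is lower semicontinuous, so its infimum `2δ` is
attained; it is positive there because `I_f × π` separates such pairs. Conversely, if `I_{f₀} × π`
identified such a pair, the triangle inequality through `f₀` would bound their orbit distance by
`2 max ‖f − f₀‖ < 2δ`. -/

noncomputable def orbitDist {G X K : Type*} [Group G] [PseudoMetricSpace K] (α : GAction G X)
    (c : G → ℝ) (f : X → K) (x y : X) : ℝ≥0∞ :=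
  ∑' g, ENNReal.ofReal (c g * dist (Ifun α f x g) (Ifun α f y g))

/-- The quantity `2δ` of the statement. -/
noncomputable def separationGap {G X Y K : Type*} [Group G] [PseudoMetricSpace X]
    [PseudoMetricSpace K] (α : GAction G X) (c : G → ℝ) (f : X → K) (π : X → Y) (η : ℝ) :
    ℝ≥0∞ :=
  sInf {r | ∃ x y : X, π x = π y ∧ η ≤ dist x y ∧ r = orbitDist α c f x y}

theorem Metric.diam_lt_of_isCompact {X : Type*} [PseudoMetricSpace X] {s : Set X}
    (hs : IsCompact s) {η : ℝ} (hη : 0 < η) (h : ∀ x ∈ s, ∀ y ∈ s, dist x y < η) :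
    Metric.diam s < η := by
  rcases s.eq_empty_or_nonempty with rfl | hne
  · simpa using hη
  · obtain ⟨p, hp, hmax⟩ := (hs.prod hs).exists_isMaxOn (hne.prod hne)
      continuous_dist.continuousOn
    calc Metric.diam s ≤ dist p.1 p.2 :=
          Metric.diam_le_of_forall_dist_le dist_nonneg fun x hx y hy =>
            isMaxOn_iff.1 hmax (x, y) ⟨hx, hy⟩
      _ < η := h p.1 hp.1 p.2 hp.2

theorem LowerSemicontinuousOn.sInf_image_pos {α : Type*} [TopologicalSpace α] {f : α → ℝ≥0∞}
    {s : Set α} (hf : LowerSemicontinuousOn f s) (hs : IsCompact s) (hpos : ∀ a ∈ s, 0 < f a) :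
    0 < sInf (f '' s) := by
  rcases s.eq_empty_or_nonempty with rfl | hne
  · simp
  · obtain ⟨a, ha, hmin⟩ := hf.exists_isMinOn hne hs
    exact (hpos a ha).trans_le
      (le_sInf (Set.forall_mem_image.2 fun x hx => isMinOn_iff.1 hmin x hx))

theorem ENNReal.tsum_ofReal_mul_le {ι : Type*} {c a : ι → ℝ} {B : ℝ} (hc : ∀ i, 0 ≤ c i)
    (hcs : Summable c) (hc1 : ∑' i, c i = 1) (hB : 0 ≤ B) (ha : ∀ i, a i ≤ B) :
    ∑' i, ENNReal.ofReal (c i * a i) ≤ ENNReal.ofReal B :=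
  calc ∑' i, ENNReal.ofReal (c i * a i) ≤ ∑' i, ENNReal.ofReal (c i * B) :=
        ENNReal.tsum_le_tsum fun i =>
          ENNReal.ofReal_le_ofReal (mul_le_mul_of_nonneg_left (ha i) (hc i))
    _ = ENNReal.ofReal B := by
        rw [← ENNReal.ofReal_tsum_of_nonneg (fun i => mul_nonneg (hc i) hB) (hcs.mul_right B),
          tsum_mul_right, hc1, one_mul]

section

variable {G X K : Type*} [Group G] {α : GAction G X} {c : G → ℝ}

theorem lowerSemicontinuous_orbitDist [TopologicalSpace X] [PseudoMetricSpace K] {f : X → K}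
    (hα : ∀ g, Continuous (α.act g)) (hf : Continuous f) :
    LowerSemicontinuous fun p : X × X => orbitDist α c f p.1 p.2 :=
  lowerSemicontinuous_tsum fun g => (ENNReal.continuous_ofReal.comp (continuous_const.mul
    ((hf.comp ((hα g⁻¹).comp continuous_fst)).dist
      (hf.comp ((hα g⁻¹).comp continuous_snd))))).lowerSemicontinuous

theorem Ifun_eq_of_orbitDist_eq_zero [MetricSpace K] {f : X → K} (hc : ∀ g, 0 < c g) {x y : X}
    (h : orbitDist α c f x y = 0) : Ifun α f x = Ifun α f y := by
  funext g
  have hg := ENNReal.ofReal_eq_zero.1 (ENNReal.tsum_eq_zero.1 h g)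
  exact dist_le_zero.1 (nonpos_of_mul_nonpos_right hg (hc g))

theorem orbitDist_le_of_Ifun_eq [PseudoMetricSpace K] {f f₀ : X → K} (hc : ∀ g, 0 ≤ c g)
    (hcs : Summable c) (hc1 : ∑' g, c g = 1) {D : ℝ} (hD : ∀ w, dist (f w) (f₀ w) ≤ D)
    {x y : X} (h : Ifun α f₀ x = Ifun α f₀ y) : orbitDist α c f x y ≤ ENNReal.ofReal (2 * D) := by
  refine ENNReal.tsum_ofReal_mul_le hc hcs hc1 (by linarith [dist_nonneg.trans (hD x)]) fun g => ?_
  have hmid : dist (Ifun α f₀ x g) (Ifun α f₀ y g) = 0 := by rw [h, dist_self]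
  calc dist (Ifun α f x g) (Ifun α f y g)
      ≤ dist (f (α.act g⁻¹ x)) (f₀ (α.act g⁻¹ x)) + dist (Ifun α f₀ x g) (Ifun α f₀ y g)
        + dist (f₀ (α.act g⁻¹ y)) (f (α.act g⁻¹ y)) := dist_triangle4 _ _ _ _
    _ ≤ D + 0 + D := by
        rw [hmid, dist_comm (f₀ _)]
        gcongr <;> apply hD
    _ = 2 * D := by ring

end

section

variable {G X Y K : Type*} [Group G] [PseudoMetricSpace X] [CompactSpace X] [TopologicalSpace Y]
  [T2Space Y] [MetricSpace K] {α : GAction G X} {π : X → Y} {c : G → ℝ} {η : ℝ}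

theorem separationGap_pos (hα : ∀ g, Continuous (α.act g)) (hπ : Continuous π)
    (hc : ∀ g, 0 < c g) {f : X → K} (hf : Continuous f)
    (hfemb : IsEpsEmbedding (fun x => (Ifun α f x, π x)) η) : 0 < separationGap α c f π η := by
  set P : Set (X × X) := {p | π p.1 = π p.2 ∧ η ≤ dist p.1 p.2}
  have hP : IsCompact P := ((isClosed_eq (hπ.comp continuous_fst) (hπ.comp continuous_snd)).inter
    (isClosed_le continuous_const continuous_dist)).isCompact
  have himage : separationGap α c f π η = sInf ((fun p => orbitDist α c f p.1 p.2) '' P) := by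
    unfold separationGap
    congr 1
    ext r
    simp [P, eq_comm, and_assoc]
  rw [himage]
  refine ((lowerSemicontinuous_orbitDist hα hf).lowerSemicontinuousOn P).sInf_image_pos hP ?_
  rintro ⟨x, y⟩ ⟨hπxy, hxy⟩
  refine pos_iff_ne_zero.2 fun h0 => (hxy.trans ?_).not_gt (hfemb (Ifun α f x, π x))
  have hy : y ∈ (fun x => (Ifun α f x, π x)) ⁻¹' {(Ifun α f x, π x)} := by
    simp [Ifun_eq_of_orbitDist_eq_zero hc h0, hπxy]
  exact Metric.dist_le_diam_of_mem Metric.isBounded_of_compactSpace rfl hy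

theorem isEpsEmbedding_of_two_mul_le_separationGap (hα : ∀ g, Continuous (α.act g))
    (hπ : Continuous π) (hη : 0 < η) (hc : ∀ g, 0 ≤ c g) (hcs : Summable c)
    (hc1 : ∑' g, c g = 1) {f f₀ : X → K} (hf : Continuous f) (hf₀ : Continuous f₀) {δ : ℝ≥0∞}
    (hδ : 2 * δ ≤ separationGap α c f π η) (hclose : ∀ x, ENNReal.ofReal (dist (f x) (f₀ x)) < δ) :
    IsEpsEmbedding (fun x => (Ifun α f₀ x, π x)) η := by
  intro z
  have hcont : Continuous fun x => (Ifun α f₀ x, π x) :=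
    (continuous_pi fun g => hf₀.comp (hα g⁻¹)).prodMk hπ
  refine Metric.diam_lt_of_isCompact (isClosed_singleton.preimage hcont).isCompact hη
    fun x hx y hy => ?_
  by_contra! hxy
  obtain ⟨x₀, -, hx₀⟩ := isCompact_univ.exists_isMaxOn ⟨x, trivial⟩ (hf.dist hf₀).continuousOn
  have hD : ∀ w, dist (f w) (f₀ w) ≤ dist (f x₀) (f₀ x₀) := fun w => isMaxOn_iff.1 hx₀ w trivial
  have hfib : Ifun α f₀ x = Ifun α f₀ y ∧ π x = π y := Prod.mk.inj (hx.trans hy.symm)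
  refine lt_irrefl (separationGap α c f π η) ?_
  calc separationGap α c f π η ≤ orbitDist α c f x y := sInf_le ⟨x, y, hfib.2, hxy, rfl⟩
    _ ≤ ENNReal.ofReal (2 * dist (f x₀) (f₀ x₀)) := orbitDist_le_of_Ifun_eq hc hcs hc1 hD hfib.1
    _ = 2 * ENNReal.ofReal (dist (f x₀) (f₀ x₀)) := by
        rw [ENNReal.ofReal_mul zero_le_two, ENNReal.ofReal_ofNat]
    _ < 2 * δ := ENNReal.mul_lt_mul_right two_ne_zero ENNReal.ofNat_ne_top (hclose x₀)
    _ ≤ separationGap α c f π η := hδ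

theorem isOpen_setOf_isEpsEmbedding (hα : ∀ g, Continuous (α.act g)) (hπ : Continuous π)
    (hη : 0 < η) (hc : ∀ g, 0 < c g) (hcs : Summable c) (hc1 : ∑' g, c g = 1) :
    IsOpen {f' : C(X, K) | IsEpsEmbedding (fun x => (Ifun α (⇑f') x, π x)) η} := by
  refine Metric.isOpen_iff.2 fun f' hf' => ?_
  have hgap := separationGap_pos hα hπ hc f'.continuous hf'
  obtain ⟨r, -, hr0, hr⟩ := ENNReal.lt_iff_exists_real_btwn.1 (ENNReal.half_pos hgap.ne')
  refine ⟨r, ENNReal.ofReal_pos.1 hr0, fun f₀ hf₀ => ?_⟩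
  refine isEpsEmbedding_of_two_mul_le_separationGap hα hπ hη (fun g => (hc g).le) hcs hc1
    f'.continuous f₀.continuous ENNReal.mul_div_le fun x => lt_of_le_of_lt ?_ hr
  exact ENNReal.ofReal_le_ofReal
    ((ContinuousMap.dist_apply_le_dist x).trans (Metric.mem_ball'.1 hf₀).le)

end

theorem stmt9_general {G X Y : Type*} [Group G] [MetricSpace X] [CompactSpace X]
    [TopologicalSpace Y] [TopologicalSpace.MetrizableSpace Y] (m : ℕ)
    (α : GAction G X) (hα : ∀ g, Continuous (α.act g))
    (π : X → Y) (hπ : Continuous π) (η : ℝ) (hη : 0 < η)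
    (c : G → ℝ) (hc : ∀ g, 0 < c g) (hcs : Summable c) (hc1 : ∑' g, c g = 1)
    (f : X → Fin m → unitInterval) (hf : Continuous f)
    (hfemb : IsEpsEmbedding (fun x => (Ifun α f x, π x)) η)
    (δ : ℝ≥0∞)
    (hδ : 2 * δ = sInf {r : ℝ≥0∞ | ∃ x y : X, π x = π y ∧ η ≤ dist x y ∧
      r = ∑' g : G, ENNReal.ofReal (c g * dist (Ifun α f x g) (Ifun α f y g))}) :
    0 < δ ∧
    (∀ f₀ : X → Fin m → unitInterval, Continuous f₀ →
      (∀ x, ENNReal.ofReal (dist (f x) (f₀ x)) < δ) →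
      IsEpsEmbedding (fun x => (Ifun α f₀ x, π x)) η) ∧
    IsOpen {f' : C(X, Fin m → unitInterval) |
      IsEpsEmbedding (fun x => (Ifun α (⇑f') x, π x)) η} := by
  have hδ' : 2 * δ = separationGap α c f π η := hδ
  have hgap : 0 < separationGap α c f π η := separationGap_pos hα hπ hc hf hfemb
  refine ⟨pos_iff_ne_zero.2 fun h0 => hgap.ne' (by rw [← hδ', h0, mul_zero]),
    fun f₀ hf₀ hclose => ?_, isOpen_setOf_isEpsEmbedding hα hπ hη hc hcs hc1⟩
  exact isEpsEmbedding_of_two_mul_le_separationGap hα hπ hη (fun g => (hc g).le) hcs hc1 hf hf₀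
    hδ'.le hclose

theorem stmt9 {G X Y : Type*} [Group G] [Countable G] [MetricSpace X] [CompactSpace X]
    [TopologicalSpace Y] [CompactSpace Y] [TopologicalSpace.MetrizableSpace Y] (m : ℕ)
    (α : GAction G X) (hα : ∀ g, Continuous (α.act g))
    (π : X → Y) (hπ : Continuous π) (η : ℝ) (hη : 0 < η)
    (c : G → ℝ) (hc : ∀ g, 0 < c g) (hcs : Summable c) (hc1 : ∑' g, c g = 1)
    (f : X → Fin m → unitInterval) (hf : Continuous f)
    (hfemb : IsEpsEmbedding (fun x => (Ifun α f x, π x)) η)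
    (δ : ℝ≥0∞)
    (hδ : 2 * δ = sInf {r : ℝ≥0∞ | ∃ x y : X, π x = π y ∧ η ≤ dist x y ∧
      r = ∑' g : G, ENNReal.ofReal (c g * dist (Ifun α f x g) (Ifun α f y g))}) :
    0 < δ ∧
    (∀ f₀ : X → Fin m → unitInterval, Continuous f₀ →
      (∀ x, ENNReal.ofReal (dist (f x) (f₀ x)) < δ) →
      IsEpsEmbedding (fun x => (Ifun α f₀ x, π x)) η) ∧
    IsOpen {f' : C(X, Fin m → unitInterval) |
      IsEpsEmbedding (fun x => (Ifun α (⇑f') x, π x)) η} :=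
  stmt9_general m α hα π hπ η hη c hc hcs hc1 f hf hfemb δ hδ
end
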